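/- arXiv:1905.12509 — 4 statements merged into one kernel-verified Lean document; each statement's English description precedes it below -/
import Mathlib

section
/- The subgroup Sp(2∞;Z) of finitely supported symplectic automorphisms (those fixing all but finitely many basis vectors a_i, b_i) is dense in Sp(ℕ;Z) with respect to the permutation topology. -/
abbrev SpV : Type := (ℕ × Bool) →₀ ℤ

/-- The standard symplectic form: `ω(a_i, b_j) = δ_{ij}`, `ω(a_i,a_j) = ω(b_i,b_j) = 0`,
where `a_i = single (i, true) 1`, `b_i = single (i, false) 1`. -/
def omegaV (v w : SpV) : ℤ :=
  v.sum fun p c => if p.2 then c * w (p.1, false) else -(c * w (p.1, true))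

/-- The infinite-degree integral symplectic group `Sp(ℕ;ℤ)`. -/
def Sp : Type := {A : SpV ≃ₗ[ℤ] SpV // ∀ v w : SpV, omegaV (A v) (A w) = omegaV v w}

/-- The permutation topology on `Sp(ℕ;ℤ)`: the subbasis consists of the sets
`U_v = {A : A v = v}` and their left translates `B U_v = {A : A v = B v}`. -/
instance permTop : TopologicalSpace Sp :=
  TopologicalSpace.generateFrom {T | ∃ (B : Sp) (v : SpV), T = {A : Sp | A.1 v = B.1 v}}

/-- `Sp(2∞;ℤ)`: the subgroup of symplectic automorphisms fixing all but finitely many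
of the basis vectors `a_i, b_i`. -/
def SpFin : Set Sp :=
  {A | ∃ g : ℕ, ∀ p : ℕ × Bool, g ≤ p.1 → A.1 (Finsupp.single p 1) = Finsupp.single p 1}

namespace SpAux

/-- the right-slot linear functional attached to a basis index -/
noncomputable def LP (p : ℕ × Bool) : SpV →ₗ[ℤ] ℤ :=
  if p.2 then Finsupp.lapply (p.1, false) else -(Finsupp.lapply (p.1, true))

noncomputable def omegaL : SpV →ₗ[ℤ] SpV →ₗ[ℤ] ℤ :=
  Finsupp.lsum ℤ fun p => LinearMap.toSpanSingleton ℤ _ (LP p)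

lemma omegaV_eq (v w : SpV) : omegaV v w = omegaL v w := by
  rw [omegaV, omegaL, Finsupp.lsum_apply]
  simp only [Finsupp.sum, LinearMap.coe_sum, Finset.sum_apply]
  refine Finset.sum_congr rfl fun p hp => ?_
  rcases p with ⟨i, t⟩
  cases t <;> simp [LP, LinearMap.toSpanSingleton_apply, smul_eq_mul, mul_comm]

lemma omega_single (p : ℕ × Bool) (c : ℤ) (w : SpV) :
    omegaV (Finsupp.single p c) w
      = c * (if p.2 then w (p.1, false) else -(w (p.1, true))) := by
  rw [omegaV_eq, omegaL, Finsupp.lsum_single, LinearMap.toSpanSingleton_apply]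
  rcases p with ⟨i, t⟩
  cases t <;> simp [LP, smul_eq_mul]

lemma omega_add_left (v v' w : SpV) : omegaV (v + v') w = omegaV v w + omegaV v' w := by
  simp [omegaV_eq]

lemma omega_add_right (v w w' : SpV) : omegaV v (w + w') = omegaV v w + omegaV v w' := by
  simp [omegaV_eq]

lemma omega_smul_left (c : ℤ) (v w : SpV) : omegaV (c • v) w = c * omegaV v w := by
  simp [omegaV_eq]

lemma omega_smul_right (c : ℤ) (v w : SpV) : omegaV v (c • w) = c * omegaV v w := by
  simp [omegaV_eq]

lemma omega_sub_left (v v' w : SpV) : omegaV (v - v') w = omegaV v w - omegaV v' w := by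
  simp [omegaV_eq]

lemma omega_sub_right (v w w' : SpV) : omegaV v (w - w') = omegaV v w - omegaV v w' := by
  simp [omegaV_eq]

lemma omega_neg_left (v w : SpV) : omegaV (-v) w = -omegaV v w := by simp [omegaV_eq]
lemma omega_neg_right (v w : SpV) : omegaV v (-w) = -omegaV v w := by simp [omegaV_eq]

lemma omega_single_single (i j : ℕ) (s t : Bool) (c d : ℤ) :
    omegaV (Finsupp.single (i,s) c) (Finsupp.single (j,t) d)
      = if i = j ∧ s = true ∧ t = false then c * d
        else if i = j ∧ s = false ∧ t = true then -(c * d) else 0 := by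
  rw [omega_single]
  rcases eq_or_ne i j with rfl | h
  · cases s <;> cases t <;> simp [Finsupp.single_apply]
  · cases s <;> cases t <;> simp [Finsupp.single_apply, h, Ne.symm h, Prod.ext_iff]

lemma omega_comm (v w : SpV) : omegaV w v = -omegaV v w := by
  induction v using Finsupp.induction_linear with
  | zero => simp [omegaV_eq]
  | add a b ha hb => rw [omega_add_left, omega_add_right, ha, hb]; ring
  | single p c =>
    induction w using Finsupp.induction_linear with
    | zero => simp [omegaV_eq]
    | add a b ha hb => rw [omega_add_left, omega_add_right, ha, hb]; ring
    | single q d =>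
      rcases p with ⟨i, s⟩; rcases q with ⟨j, t⟩
      rw [omega_single_single, omega_single_single]
      rcases eq_or_ne i j with rfl | h
      · cases s <;> cases t <;> simp [mul_comm]
      · simp [h, Ne.symm h]

lemma omega_self (v : SpV) : omegaV v v = 0 := by
  have := omega_comm v v; omega

noncomputable section
open Finsupp

/-- identity -/
def SpOne : Sp := ⟨LinearEquiv.refl ℤ SpV, fun _ _ => rfl⟩

/-- product: apply `B` first, then `A` -/
def SpMul (A B : Sp) : Sp := ⟨B.1.trans A.1, fun v w => by
  simp only [LinearEquiv.trans_apply]; rw [A.2, B.2]⟩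

lemma SpMul_apply (A B : Sp) (x : SpV) : (SpMul A B).1 x = A.1 (B.1 x) := rfl

def SpInv (A : Sp) : Sp := ⟨A.1.symm, fun v w => by
  conv_rhs => rw [← A.1.apply_symm_apply v, ← A.1.apply_symm_apply w, A.2]⟩

lemma SpInv_apply (A : Sp) (x : SpV) : (SpInv A).1 x = A.1.symm x := rfl

/-- The Eichler-type map `x ↦ x + ω(x,e)•w + ω(x,w)•e` for `ω(e,w) = 0`. -/
def EmapFun (e w : SpV) : SpV →ₗ[ℤ] SpV :=
  LinearMap.id + (omegaL.flip e).smulRight w + (omegaL.flip w).smulRight e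

lemma EmapFun_apply (e w x : SpV) :
    EmapFun e w x = x + omegaV x e • w + omegaV x w • e := by
  simp [EmapFun, omegaV_eq]

def Emap (e w : SpV) (h : omegaV e w = 0) : Sp := by
  have hwe : omegaV w e = 0 := by rw [omega_comm, h]; ring
  have hee := omega_self e
  have hww := omega_self w
  refine ⟨LinearEquiv.ofLinear (EmapFun e w) (EmapFun e (-w) ) ?_ ?_, ?_⟩
  · refine LinearMap.ext fun x => ?_
    simp only [LinearMap.comp_apply, EmapFun_apply, LinearMap.id_apply]
    simp only [omega_add_left, omega_smul_left, omega_neg_left, omega_neg_right,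
      omega_smul_right, hwe, h, hee, hww]
    module
  · refine LinearMap.ext fun x => ?_
    simp only [LinearMap.comp_apply, EmapFun_apply, LinearMap.id_apply]
    simp only [omega_add_left, omega_smul_left, omega_neg_left, omega_neg_right,
      omega_smul_right, hwe, h, hee, hww]
    module
  · intro x y
    simp only [LinearEquiv.ofLinear_apply, EmapFun_apply]
    simp only [omega_add_left, omega_add_right, omega_smul_left, omega_smul_right,
      hwe, h, hee, hww]
    have h1 : omegaV w y = -omegaV y w := omega_comm y w ▸ by rw [omega_comm]
    rw [omega_comm w y, omega_comm e y]
    ring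

lemma Emap_apply (e w : SpV) (h : omegaV e w = 0) (x : SpV) :
    (Emap e w h).1 x = x + omegaV x e • w + omegaV x w • e := by
  simp [Emap, EmapFun_apply]

lemma Emap_fix (e w : SpV) (h : omegaV e w = 0) (x : SpV)
    (h1 : omegaV x e = 0) (h2 : omegaV x w = 0) : (Emap e w h).1 x = x := by
  simp [Emap_apply, h1, h2]

/-- transvection `x ↦ x + c·ω(x,e)•e` -/
def TmapFun (c : ℤ) (e : SpV) : SpV →ₗ[ℤ] SpV :=
  LinearMap.id + (c • omegaL.flip e).smulRight e

lemma TmapFun_apply (c : ℤ) (e x : SpV) :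
    TmapFun c e x = x + (c * omegaV x e) • e := by
  simp [TmapFun, omegaV_eq]

def Tmap (c : ℤ) (e : SpV) : Sp := by
  have hee := omega_self e
  refine ⟨LinearEquiv.ofLinear (TmapFun c e) (TmapFun (-c) e) ?_ ?_, ?_⟩
  · refine LinearMap.ext fun x => ?_
    simp only [LinearMap.comp_apply, TmapFun_apply, LinearMap.id_apply]
    simp only [omega_add_left, omega_smul_left, hee]
    module
  · refine LinearMap.ext fun x => ?_
    simp only [LinearMap.comp_apply, TmapFun_apply, LinearMap.id_apply]
    simp only [omega_add_left, omega_smul_left, hee]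
    module
  · intro x y
    simp only [LinearEquiv.ofLinear_apply, TmapFun_apply]
    simp only [omega_add_left, omega_add_right, omega_smul_left, omega_smul_right, hee]
    rw [omega_comm e y]
    ring

lemma Tmap_apply (c : ℤ) (e x : SpV) : (Tmap c e).1 x = x + (c * omegaV x e) • e := by
  simp [Tmap, TmapFun_apply]

lemma Tmap_fix (c : ℤ) (e x : SpV) (h1 : omegaV x e = 0) : (Tmap c e).1 x = x := by
  simp [Tmap_apply, h1]

end

end SpAux

namespace SpAux
noncomputable section
open Finsupp

/-- `x` vanishes at all indices `≥ n` -/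
def Bdd (n : ℕ) (x : SpV) : Prop := ∀ p : ℕ × Bool, n ≤ p.1 → x p = 0

lemma bdd_exists (x : SpV) : ∃ n, Bdd n x := by
  refine ⟨(x.support.sup fun p => p.1) + 1, fun p hp => ?_⟩
  by_contra h
  have hs : p ∈ x.support := Finsupp.mem_support_iff.2 h
  have h2 : p.1 ≤ x.support.sup fun p => p.1 := by
    simpa using Finset.le_sup (f := fun p : ℕ × Bool => p.1) hs
  omega

lemma Bdd.mono {n m : ℕ} {x : SpV} (h : Bdd n x) (hnm : n ≤ m) : Bdd m x :=
  fun p hp => h p (le_trans hnm hp)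

lemma Bdd.add {n : ℕ} {x y : SpV} (hx : Bdd n x) (hy : Bdd n y) : Bdd n (x + y) := by
  intro p hp; simp [Finsupp.add_apply, hx p hp, hy p hp]

lemma Bdd.smul {n : ℕ} (c : ℤ) {x : SpV} (hx : Bdd n x) : Bdd n (c • x) := by
  intro p hp; simp [Finsupp.smul_apply, hx p hp]

lemma Bdd.sub {n : ℕ} {x y : SpV} (hx : Bdd n x) (hy : Bdd n y) : Bdd n (x - y) := by
  intro p hp; simp [Finsupp.sub_apply, hx p hp, hy p hp]

lemma Bdd.neg {n : ℕ} {x : SpV} (hx : Bdd n x) : Bdd n (-x) := by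
  intro p hp; simp [hx p hp]

lemma bdd_single {n : ℕ} (p : ℕ × Bool) (c : ℤ) (h : p.1 < n) :
    Bdd n (Finsupp.single p c) := by
  intro q hq
  rw [Finsupp.single_apply]
  have : p ≠ q := fun e => by subst e; omega
  simp [this]

/-- pairing of a bounded vector with a high basis vector vanishes -/
lemma Bdd.omega_single_right {n : ℕ} {x : SpV} (hx : Bdd n x) (p : ℕ × Bool) (c : ℤ)
    (hp : n ≤ p.1) : omegaV x (Finsupp.single p c) = 0 := by
  rw [omega_comm, omega_single]
  rcases p with ⟨j, t⟩
  cases t <;> simp [hx (j, true) hp, hx (j, false) hp]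

lemma Bdd.omega_single_left {n : ℕ} {x : SpV} (hx : Bdd n x) (p : ℕ × Bool) (c : ℤ)
    (hp : n ≤ p.1) : omegaV (Finsupp.single p c) x = 0 := by
  rw [omega_single]
  rcases p with ⟨j, t⟩
  cases t <;> simp [hx (j, true) hp, hx (j, false) hp]

/-- `Emap` is in `SpFin` whenever its two defining vectors are bounded. -/
lemma Emap_mem_SpFin {e w : SpV} (h : omegaV e w = 0) {n : ℕ}
    (he : Bdd n e) (hw : Bdd n w) : Emap e w h ∈ SpFin := by
  refine ⟨n, fun p hp => ?_⟩
  exact Emap_fix e w h _ (he.omega_single_left p 1 hp) (hw.omega_single_left p 1 hp)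

lemma Tmap_mem_SpFin (c : ℤ) {e : SpV} {n : ℕ} (he : Bdd n e) : Tmap c e ∈ SpFin := by
  refine ⟨n, fun p hp => ?_⟩
  exact Tmap_fix c e _ (he.omega_single_left p 1 hp)

lemma SpOne_mem_SpFin : SpOne ∈ SpFin := ⟨0, fun p _ => rfl⟩

lemma SpMul_mem_SpFin {A B : Sp} (hA : A ∈ SpFin) (hB : B ∈ SpFin) : SpMul A B ∈ SpFin := by
  obtain ⟨g1, h1⟩ := hA
  obtain ⟨g2, h2⟩ := hB
  exact ⟨max g1 g2, fun p hp => by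
    rw [SpMul_apply, h2 p (le_trans (le_max_right _ _) hp), h1 p (le_trans (le_max_left _ _) hp)]⟩


def aV (i : ℕ) : SpV := Finsupp.single (i, true) 1
def bV (i : ℕ) : SpV := Finsupp.single (i, false) 1

@[simp] lemma omega_aa (i j : ℕ) : omegaV (aV i) (aV j) = 0 := by
  simp [aV, omega_single_single]

@[simp] lemma omega_bb (i j : ℕ) : omegaV (bV i) (bV j) = 0 := by
  simp [bV, omega_single_single]

@[simp] lemma omega_ab (i j : ℕ) : omegaV (aV i) (bV j) = if i = j then 1 else 0 := by
  simp [aV, bV, omega_single_single]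

@[simp] lemma omega_ba (i j : ℕ) : omegaV (bV i) (aV j) = if i = j then -1 else 0 := by
  simp [bV, aV, omega_single_single]

lemma bdd_aV {i n : ℕ} (h : i < n) : Bdd n (aV i) := bdd_single _ _ h

lemma Bdd.omega_aV_left {n i : ℕ} {x : SpV} (hx : Bdd n x) (h : n ≤ i) :
    omegaV (aV i) x = 0 := hx.omega_single_left (i, true) 1 h
lemma Bdd.omega_bV_left {n i : ℕ} {x : SpV} (hx : Bdd n x) (h : n ≤ i) :
    omegaV (bV i) x = 0 := hx.omega_single_left (i, false) 1 h
lemma Bdd.omega_aV_right {n i : ℕ} {x : SpV} (hx : Bdd n x) (h : n ≤ i) :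
    omegaV x (aV i) = 0 := hx.omega_single_right (i, true) 1 h
lemma Bdd.omega_bV_right {n i : ℕ} {x : SpV} (hx : Bdd n x) (h : n ≤ i) :
    omegaV x (bV i) = 0 := hx.omega_single_right (i, false) 1 h
lemma bdd_bV {i n : ℕ} (h : i < n) : Bdd n (bV i) := bdd_single _ _ h

lemma pair_trans (k : ℕ) (u v : SpV) (huv : omegaV u v = 1)
    (hu : ∀ p : ℕ × Bool, p.1 < k → omegaV (Finsupp.single p 1) u = 0)
    (hv : ∀ p : ℕ × Bool, p.1 < k → omegaV (Finsupp.single p 1) v = 0) :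
    ∃ D : Sp, D ∈ SpFin ∧ D.1 (aV k) = u ∧ D.1 (bV k) = v ∧
      ∀ p : ℕ × Bool, p.1 < k → D.1 (Finsupp.single p 1) = Finsupp.single p 1 := by
  obtain ⟨n1, hn1⟩ := bdd_exists u
  obtain ⟨n2, hn2⟩ := bdd_exists v
  set h : ℕ := max (max n1 n2) (k+1) with hh
  have hu' : Bdd h u := hn1.mono (by omega)
  have hv' : Bdd h v := hn2.mono (by omega)
  have hkh : k ≠ h := by omega
  have hkh1 : k ≠ h + 1 := by omega
  have hhh1 : h ≠ h + 1 := by omega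
  -- pairings of u, v with high basis vectors
  have uaH : omegaV (aV h) u = 0 := hu'.omega_single_left _ 1 (le_refl _)
  have ubH : omegaV (bV h) u = 0 := hu'.omega_single_left _ 1 (le_refl _)
  have uaH1 : omegaV (aV (h+1)) u = 0 := hu'.omega_single_left _ 1 (by simp)
  have ubH1 : omegaV (bV (h+1)) u = 0 := hu'.omega_single_left _ 1 (by simp)
  have uaH' : omegaV u (aV h) = 0 := hu'.omega_single_right _ 1 (le_refl _)
  have ubH' : omegaV u (bV h) = 0 := hu'.omega_single_right _ 1 (le_refl _)
  have uaH1' : omegaV u (aV (h+1)) = 0 := hu'.omega_single_right _ 1 (by simp)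
  have ubH1' : omegaV u (bV (h+1)) = 0 := hu'.omega_single_right _ 1 (by simp)
  have vaH : omegaV (aV h) v = 0 := hv'.omega_single_left _ 1 (le_refl _)
  have vbH : omegaV (bV h) v = 0 := hv'.omega_single_left _ 1 (le_refl _)
  have vaH1 : omegaV (aV (h+1)) v = 0 := hv'.omega_single_left _ 1 (by simp)
  have vbH1 : omegaV (bV (h+1)) v = 0 := hv'.omega_single_left _ 1 (by simp)
  have vaH' : omegaV v (aV h) = 0 := hv'.omega_single_right _ 1 (le_refl _)
  have vbH' : omegaV v (bV h) = 0 := hv'.omega_single_right _ 1 (le_refl _)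
  have vaH1' : omegaV v (aV (h+1)) = 0 := hv'.omega_single_right _ 1 (by simp)
  have vbH1' : omegaV v (bV (h+1)) = 0 := hv'.omega_single_right _ 1 (by simp)
  set m : ℤ := omegaV (aV k) u with hm
  set n : ℤ := omegaV (bV k) u with hn
  -- the eight elementary maps
  have c1 : omegaV (aV h) (bV k) = 0 := by simp [hkh.symm, Ne.symm hkh]
  set M1 : Sp := Emap (aV h) (bV k) c1 with hM1
  have c2 : omegaV (bV h) (u - aV k) = 0 := by
    rw [omega_sub_right, ubH]; simp [Ne.symm hkh]
  set M2 : Sp := Emap (bV h) (u - aV k) c2 with hM2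
  set M3 : Sp := Tmap (-m) (bV h) with hM3
  have c4 : omegaV v (-(aV h)) = 0 := by rw [omega_neg_right, vaH']; ring
  set M4 : Sp := Emap v (-(aV h)) c4 with hM4
  set C4 : Sp := SpMul M4 (SpMul M3 (SpMul M2 M1)) with hC4
  -- the x-chain
  have x1 : M1.1 (aV k) = aV k + aV h := by
    rw [hM1, Emap_apply]
    have e1 : omegaV (aV k) (aV h) = 0 := omega_aa k h
    have e2 : omegaV (aV k) (bV k) = 1 := by simp
    rw [e1, e2]; module
  have x2 : M2.1 (aV k + aV h) = u + aV h + m • bV h := by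
    rw [hM2, Emap_apply]
    have e1 : omegaV (aV k + aV h) (bV h) = 1 := by
      rw [omega_add_left]; simp [hkh]
    have e2 : omegaV (aV k + aV h) (u - aV k) = m := by
      rw [omega_add_left, omega_sub_right, omega_sub_right, uaH]
      simp [← hm, hkh.symm, Ne.symm hkh]
    rw [e1, e2]; module
  have x3 : M3.1 (u + aV h + m • bV h) = u + aV h := by
    rw [hM3, Tmap_apply]
    have e1 : omegaV (u + aV h + m • bV h) (bV h) = 1 := by
      rw [omega_add_left, omega_add_left, omega_smul_left, ubH']
      simp
    rw [e1]; module
  have x4 : M4.1 (u + aV h) = u := by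
    rw [hM4, Emap_apply]
    have e1 : omegaV (u + aV h) v = 1 := by
      rw [omega_add_left, huv, vaH]; norm_num
    have e2 : omegaV (u + aV h) (-(aV h)) = 0 := by
      rw [omega_neg_right, omega_add_left, uaH', omega_self]; ring
    rw [e1, e2]; module
  have hx4 : C4.1 (aV k) = u := by
    rw [hC4, SpMul_apply, SpMul_apply, SpMul_apply, x1, x2, x3, x4]
  -- the y-chain through C4
  have y1 : M1.1 (bV k) = bV k := by
    apply Emap_fix
    · simp [hkh]
    · exact omega_self _
  have y2 : M2.1 (bV k) = bV k + (n + 1) • bV h := by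
    rw [hM2, Emap_apply]
    have e1 : omegaV (bV k) (bV h) = 0 := omega_bb k h
    have e2 : omegaV (bV k) (u - aV k) = n + 1 := by
      rw [omega_sub_right, ← hn]; simp
    rw [e1, e2]; module
  have y3 : M3.1 (bV k + (n + 1) • bV h) = bV k + (n + 1) • bV h := by
    apply Tmap_fix
    rw [omega_add_left, omega_smul_left]; simp
  set q : ℤ := omegaV (bV k + (n + 1) • bV h) v with hq
  set y4 : SpV := bV k + (n + 1) • bV h - q • aV h + (n + 1) • v with hy4
  have y4eq : M4.1 (bV k + (n + 1) • bV h) = y4 := by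
    rw [hM4, Emap_apply]
    have e2 : omegaV (bV k + (n + 1) • bV h) (-(aV h)) = n + 1 := by
      rw [omega_neg_right, omega_add_left, omega_smul_left]
      simp [Ne.symm hkh, hkh]
    rw [← hq, e2, hy4]; module
  have hy4C : C4.1 (bV k) = y4 := by
    rw [hC4, SpMul_apply, SpMul_apply, SpMul_apply, y1, y2, y3, y4eq]
  -- properties of y4
  have h_uy4 : omegaV u y4 = 1 := by
    rw [← hx4, ← hy4C, C4.2]; simp
  have hy4bdd : Bdd (h+1) y4 := by
    rw [hy4]
    exact (((bdd_bV (by omega)).add ((bdd_bV (by omega)).smul _ |>.mono (le_refl _))).sub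
      ((bdd_aV (by omega)).smul _)).add ((hv'.mono (by omega)).smul _)
  set d : SpV := v - y4 with hd
  have hdbdd : Bdd (h+1) d := (hv'.mono (by omega)).sub hy4bdd
  have h_ud : omegaV u d = 0 := by rw [hd, omega_sub_right, huv, h_uy4]; ring
  set r : ℤ := omegaV y4 v with hr
  -- the N maps
  have c5 : omegaV u (bV (h+1)) = 0 := ubH1'
  set N0 : Sp := Emap u (bV (h+1)) c5 with hN0
  have c6 : omegaV (aV (h+1)) d = 0 := hdbdd.omega_aV_left (le_refl _)
  set N1 : Sp := Emap (aV (h+1)) d c6 with hN1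
  set N2 : Sp := Tmap (-r) (aV (h+1)) with hN2
  have c7 : omegaV (-u) (bV (h+1)) = 0 := by rw [omega_neg_left, ubH1']; ring
  set N3 : Sp := Emap (-u) (bV (h+1)) c7 with hN3
  set D : Sp := SpMul N3 (SpMul N2 (SpMul N1 (SpMul N0 C4))) with hD
  -- u is fixed by the N maps
  have nu0 : N0.1 u = u := Emap_fix _ _ _ _ (omega_self u) ubH1'
  have nu1 : N1.1 u = u := by
    apply Emap_fix
    · rw [omega_comm, uaH1]; ring
    · exact h_ud
  have nu2 : N2.1 u = u := by
    apply Tmap_fix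
    rw [omega_comm, uaH1]; ring
  have nu3 : N3.1 u = u := by
    apply Emap_fix
    · rw [omega_neg_right, omega_self]; ring
    · exact ubH1'
  -- the y-chain through the N maps
  have hy4u : omegaV y4 u = -1 := by have := omega_comm y4 u; linarith
  have z0 : N0.1 y4 = y4 - bV (h+1) := by
    rw [hN0, Emap_apply, hy4u, hy4bdd.omega_bV_right (le_refl _)]
    module
  have z1 : N1.1 (y4 - bV (h+1)) = v - bV (h+1) + r • aV (h+1) := by
    rw [hN1, Emap_apply]
    have e1 : omegaV (y4 - bV (h+1)) (aV (h+1)) = 1 := by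
      rw [omega_sub_left, hy4bdd.omega_aV_right (le_refl _)]
      simp
    have e2 : omegaV (y4 - bV (h+1)) d = r := by
      rw [omega_sub_left, hdbdd.omega_bV_left (le_refl _), hd, omega_sub_right,
        omega_self, ← hr]
      ring
    rw [e1, e2, hd]; module
  have z2 : N2.1 (v - bV (h+1) + r • aV (h+1)) = v - bV (h+1) := by
    rw [hN2, Tmap_apply]
    have e1 : omegaV (v - bV (h+1) + r • aV (h+1)) (aV (h+1)) = 1 := by
      rw [omega_add_left, omega_sub_left, omega_smul_left, vaH1']
      simp
    rw [e1]; module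
  have z3 : N3.1 (v - bV (h+1)) = v := by
    rw [hN3, Emap_apply]
    have e1 : omegaV (v - bV (h+1)) (-u) = 1 := by
      rw [omega_neg_right, omega_sub_left, omega_comm u v, huv, ubH1]
      ring
    have e2 : omegaV (v - bV (h+1)) (bV (h+1)) = 0 := by
      rw [omega_sub_left, vbH1', omega_self]; ring
    rw [e1, e2]; module
  refine ⟨D, ?_, ?_, ?_, ?_⟩
  · -- D ∈ SpFin
    have b1 : Bdd (h+2) (aV h) := bdd_aV (by omega)
    have b2 : Bdd (h+2) (bV h) := bdd_bV (by omega)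
    have b3 : Bdd (h+2) (aV (h+1)) := bdd_aV (by omega)
    have b4 : Bdd (h+2) (bV (h+1)) := bdd_bV (by omega)
    have b5 : Bdd (h+2) (aV k) := bdd_aV (by omega)
    have b6 : Bdd (h+2) (bV k) := bdd_bV (by omega)
    have b7 : Bdd (h+2) u := hu'.mono (by omega)
    have b8 : Bdd (h+2) v := hv'.mono (by omega)
    exact SpMul_mem_SpFin (Emap_mem_SpFin _ b7.neg b4)
      (SpMul_mem_SpFin (Tmap_mem_SpFin _ b3)
        (SpMul_mem_SpFin (Emap_mem_SpFin _ b3 (hdbdd.mono (by omega)))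
          (SpMul_mem_SpFin (Emap_mem_SpFin _ b7 b4)
            (SpMul_mem_SpFin (Emap_mem_SpFin _ b8 b1.neg)
              (SpMul_mem_SpFin (Tmap_mem_SpFin _ b2)
                (SpMul_mem_SpFin (Emap_mem_SpFin _ b2 (b7.sub b5))
                  (Emap_mem_SpFin _ b1 b6)))))))
  · rw [hD, SpMul_apply, SpMul_apply, SpMul_apply, SpMul_apply, hx4, nu0, nu1, nu2, nu3]
  · rw [hD, SpMul_apply, SpMul_apply, SpMul_apply, SpMul_apply, hy4C, z0, z1, z2, z3]
  · intro p hp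
    have hpk : p.1 ≠ k := by omega
    have hph : p.1 ≠ h := by omega
    have hph1 : p.1 ≠ h + 1 := by omega
    have sa : ∀ j : ℕ, p.1 ≠ j → omegaV (Finsupp.single p 1) (aV j) = 0 := by
      intro j hj
      rcases p with ⟨i, t⟩
      rw [aV, omega_single_single]
      simp_all
    have sb : ∀ j : ℕ, p.1 ≠ j → omegaV (Finsupp.single p 1) (bV j) = 0 := by
      intro j hj
      rcases p with ⟨i, t⟩
      rw [bV, omega_single_single]
      simp only at hj
      simp [hj]
    have spu : omegaV (Finsupp.single p 1) u = 0 := hu p hp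
    have spv : omegaV (Finsupp.single p 1) v = 0 := hv p hp
    have spy4 : omegaV (Finsupp.single p 1) y4 = 0 := by
      rw [hy4]
      simp only [omega_add_right, omega_sub_right, omega_smul_right]
      rw [sb k hpk, sb h hph, sa h hph, spv]
      ring
    rw [hD, SpMul_apply, SpMul_apply, SpMul_apply, SpMul_apply, hC4,
      SpMul_apply, SpMul_apply, SpMul_apply]
    rw [Emap_fix _ _ _ _ (sa h hph) (sb k hpk)]
    rw [Emap_fix _ _ _ _ (sb h hph) (by rw [omega_sub_right, spu, sa k hpk]; ring)]
    rw [Tmap_fix _ _ _ (sb h hph)]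
    rw [Emap_fix _ _ _ _ spv (by rw [omega_neg_right, sa h hph]; ring)]
    rw [Emap_fix _ _ _ _ spu (sb _ hph1)]
    rw [Emap_fix _ _ _ _ (sa _ hph1) (by rw [hd, omega_sub_right, spv, spy4]; ring)]
    rw [Tmap_fix _ _ _ (sa _ hph1)]
    rw [Emap_fix _ _ _ _ (by rw [omega_neg_right, spu]; ring) (sb _ hph1)]

lemma key (g : ℕ) : ∀ (k : ℕ) (A : Sp),
    (∀ p : ℕ × Bool, p.1 < k → A.1 (Finsupp.single p 1) = Finsupp.single p 1) →
    ∃ C : Sp, C ∈ SpFin ∧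
      ∀ p : ℕ × Bool, p.1 < k + g → C.1 (Finsupp.single p 1) = A.1 (Finsupp.single p 1) := by
  induction g with
  | zero =>
    intro k A hA
    exact ⟨SpOne, SpOne_mem_SpFin, fun p hp => by rw [hA p (by omega)]; rfl⟩
  | succ g ih =>
    intro k A hA
    set u := A.1 (aV k) with hu0
    set v := A.1 (bV k) with hv0
    have huv : omegaV u v = 1 := by rw [hu0, hv0, A.2]; simp
    have hsing : ∀ p : ℕ × Bool, p.1 < k →
        omegaV (Finsupp.single p 1) (aV k) = 0 ∧ omegaV (Finsupp.single p 1) (bV k) = 0 := by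
      intro p hp
      rcases p with ⟨i, t⟩
      have : i ≠ k := by simpa using Nat.ne_of_lt hp
      constructor
      · rw [aV, omega_single_single]; simp [this]
      · rw [bV, omega_single_single]; simp [this]
    have hu : ∀ p : ℕ × Bool, p.1 < k → omegaV (Finsupp.single p 1) u = 0 := by
      intro p hp
      rw [hu0, ← hA p hp, A.2]
      exact (hsing p hp).1
    have hv : ∀ p : ℕ × Bool, p.1 < k → omegaV (Finsupp.single p 1) v = 0 := by
      intro p hp
      rw [hv0, ← hA p hp, A.2]
      exact (hsing p hp).2
    obtain ⟨D, hDfin, hDa, hDb, hDfix⟩ := pair_trans k u v huv hu hv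
    set A' : Sp := SpMul (SpInv D) A with hA'0
    have hA' : ∀ p : ℕ × Bool, p.1 < k + 1 → A'.1 (Finsupp.single p 1) = Finsupp.single p 1 := by
      intro p hp
      rcases lt_or_ge p.1 k with hlt | hge
      · rw [hA'0, SpMul_apply, SpInv_apply, hA p hlt, LinearEquiv.symm_apply_eq,
          hDfix p hlt]
      · have hpk : p.1 = k := by omega
        rcases p with ⟨i, t⟩
        simp only at hpk
        subst hpk
        cases t
        · show A'.1 (bV i) = bV i
          rw [hA'0, SpMul_apply, SpInv_apply, ← hv0, LinearEquiv.symm_apply_eq, hDb]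
        · show A'.1 (aV i) = aV i
          rw [hA'0, SpMul_apply, SpInv_apply, ← hu0, LinearEquiv.symm_apply_eq, hDa]
    obtain ⟨C', hC'fin, hC'⟩ := ih (k + 1) A' hA'
    refine ⟨SpMul D C', SpMul_mem_SpFin hDfin hC'fin, ?_⟩
    intro p hp
    have hp' : p.1 < (k + 1) + g := by omega
    rw [SpMul_apply, hC' p hp', hA'0, SpMul_apply, SpInv_apply,
      LinearEquiv.apply_symm_apply]

lemma agree (A C : Sp) (nn : ℕ)
    (hac : ∀ p : ℕ × Bool, p.1 < nn → C.1 (Finsupp.single p 1) = A.1 (Finsupp.single p 1))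
    (x : SpV) (hx : Bdd nn x) : C.1 x = A.1 x := by
  have hrep : ∀ (B : Sp), B.1 x = x.sum fun p c => c • B.1 (Finsupp.single p 1) := by
    intro B
    conv_lhs => rw [← Finsupp.sum_single x]
    rw [map_finsuppSum]
    refine Finsupp.sum_congr fun p hp => ?_
    rw [← map_smul, Finsupp.smul_single, smul_eq_mul, mul_one]
  rw [hrep A, hrep C]
  refine Finsupp.sum_congr fun p hp => ?_
  have hpn : p.1 < nn := by
    by_contra hc
    exact Finsupp.mem_support_iff.1 hp (hx p (by omega))
  rw [hac p hpn]

def nbound (x : SpV) : ℕ := (x.support.sup fun p => p.1) + 1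

lemma bdd_nbound (x : SpV) : Bdd (nbound x) x := by
  intro p hp
  by_contra hc
  have hs : p ∈ x.support := Finsupp.mem_support_iff.2 hc
  have h2 : p.1 ≤ x.support.sup fun p => p.1 := by
    simpa using Finset.le_sup (f := fun p : ℕ × Bool => p.1) hs
  rw [nbound] at hp
  omega

end
end SpAux

/-- `Sp(2∞;ℤ)` is dense in `Sp(ℕ;ℤ)` with respect to the permutation topology. -/
theorem stmt1 : Dense SpFin := by
  classical
  have hb := TopologicalSpace.isTopologicalBasis_of_subbasis
    (rfl : permTop = TopologicalSpace.generateFrom _)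
  rw [hb.dense_iff]
  rintro o ho hne
  obtain ⟨f, ⟨hfin, hsub⟩, rfl⟩ := ho
  obtain ⟨A, hA⟩ := hne
  have hvs : ∀ T ∈ f, ∃ v : SpV, T = {X : Sp | X.1 v = A.1 v} := by
    intro T hT
    obtain ⟨B, v, rfl⟩ := hsub hT
    have hAv : A.1 v = B.1 v := hA _ hT
    exact ⟨v, by ext X; simp [hAv]⟩
  choose vf hvf using hvs
  set nn : ℕ := hfin.toFinset.sup fun T =>
    if hT : T ∈ f then SpAux.nbound (vf T hT) else 0 with hnn
  have hbdd : ∀ (T : Set Sp) (hT : T ∈ f), SpAux.Bdd nn (vf T hT) := by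
    intro T hT
    refine (SpAux.bdd_nbound _).mono ?_
    have hmem : T ∈ hfin.toFinset := hfin.mem_toFinset.2 hT
    have := Finset.le_sup (f := fun T =>
      if hT : T ∈ f then SpAux.nbound (vf T hT) else 0) hmem
    simpa only [dif_pos hT] using this
  obtain ⟨C, hCfin, hC⟩ := SpAux.key nn 0 A (fun p hp => absurd hp (by omega))
  refine ⟨C, ?_, hCfin⟩
  intro T hT
  rw [hvf T hT]
  show C.1 (vf T hT) = A.1 (vf T hT)
  exact SpAux.agree A C nn (fun p hp => hC p (by omega)) _ (hbdd T hT)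
end

section
/- Let X be a compact Hausdorff totally disconnected space with at least two points, let P be the poset of nonempty proper clopen subsets of X, and let 𝒰(P) be the set of ultrafilters of P topologized by the basis N_C = {U ∈ 𝒰(P) : C ∈ U} for C ∈ P. Then the map θ : X → 𝒰(P) sending e to U_e = {C ∈ P : e ∈ C} is a homeomorphism. -/
/-- A filter in a poset: a nonempty, downward-directed, upward-closed subset. -/
def IsPosetFilter {P : Type*} [Preorder P] (F : Set P) : Prop :=
  F.Nonempty ∧ (∀ x ∈ F, ∀ y ∈ F, ∃ z ∈ F, z ≤ x ∧ z ≤ y) ∧ (∀ x ∈ F, ∀ y, x ≤ y → y ∈ F)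

/-- An ultrafilter in a poset: a maximal proper filter. -/
def IsPosetUltrafilter {P : Type*} [Preorder P] (U : Set P) : Prop :=
  IsPosetFilter U ∧ U ≠ Set.univ ∧
    ∀ F : Set P, IsPosetFilter F → F ≠ Set.univ → U ⊆ F → F = U

/-- The poset of nonempty proper clopen subsets of `X`, ordered by inclusion. -/
abbrev ClP (X : Type*) [TopologicalSpace X] : Type _ :=
  {C : Set X // IsClopen C ∧ C.Nonempty ∧ C ≠ Set.univ}

/-- The space of ultrafilters of the poset of nonempty proper clopen subsets of `X`. -/
def UP (X : Type*) [TopologicalSpace X] : Type _ :=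
  {U : Set (ClP X) // IsPosetUltrafilter U}

/-- The topology on `𝒰(P)` generated by the basis `N_C = {U : C ∈ U}`. -/
instance upTop (X : Type*) [TopologicalSpace X] : TopologicalSpace (UP X) :=
  TopologicalSpace.generateFrom {N | ∃ C : ClP X, N = {U : UP X | C ∈ U.1}}

section Aux

variable {X : Type*} [TopologicalSpace X] [CompactSpace X] [T2Space X]
    [TotallyDisconnectedSpace X]

/-- The principal ultrafilter at a point. -/
def Ue (e : X) : Set (ClP X) := {C | e ∈ C.1}

lemma exists_clopen_sep {e b : X} (h : e ≠ b) : ∃ C : ClP X, e ∈ C.1 ∧ b ∉ C.1 := by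
  obtain ⟨U, hU, heU, hbU⟩ := exists_isClopen_of_totally_separated h
  exact ⟨⟨U, hU, ⟨e, heU⟩, fun hu => hbU (hu ▸ Set.mem_univ b)⟩, heU, hbU⟩

omit [TopologicalSpace X] [CompactSpace X] [T2Space X] [TotallyDisconnectedSpace X] in
lemma exists_ne' (h2 : ∃ a b : X, a ≠ b) (e : X) : ∃ b : X, b ≠ e := by
  obtain ⟨a, b, hab⟩ := h2
  by_cases h : a = e
  · exact ⟨b, fun hb => hab (h.trans hb.symm)⟩
  · exact ⟨a, h⟩

/-- The complement of a nonempty proper clopen set, as an element of `ClP X`. -/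
def ClP.compl (C : ClP X) : ClP X :=
  ⟨C.1ᶜ, C.2.1.compl, by
    rcases Set.ne_univ_iff_exists_notMem _ |>.1 C.2.2.2 with ⟨x, hx⟩
    exact ⟨x, hx⟩, by
    intro h
    obtain ⟨x, hx⟩ := C.2.2.1
    have hx' : x ∈ C.1ᶜ := by rw [h]; trivial
    exact hx' hx⟩

lemma isFilter_Ue (h2 : ∃ a b : X, a ≠ b) (e : X) : IsPosetFilter (Ue e) := by
  obtain ⟨b, hb⟩ := exists_ne' h2 e
  obtain ⟨C, heC, hbC⟩ := exists_clopen_sep (fun h => hb h.symm)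
  refine ⟨⟨C, heC⟩, ?_, ?_⟩
  · rintro D (hD : e ∈ D.1) E (hE : e ∈ E.1)
    refine ⟨⟨D.1 ∩ E.1, D.2.1.inter E.2.1, ⟨e, hD, hE⟩, ?_⟩, ⟨hD, hE⟩,
      Set.inter_subset_left, Set.inter_subset_right⟩
    intro h
    exact D.2.2.2 (Set.eq_univ_of_univ_subset (h.symm.subset.trans Set.inter_subset_left))
  · exact fun D hD E hDE => hDE hD

lemma isUltrafilter_Ue (h2 : ∃ a b : X, a ≠ b) (e : X) : IsPosetUltrafilter (Ue e) := by
  refine ⟨isFilter_Ue h2 e, ?_, ?_⟩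
  · obtain ⟨b, hb⟩ := exists_ne' h2 e
    obtain ⟨C, hbC, heC⟩ := exists_clopen_sep hb
    exact fun h => heC (h ▸ Set.mem_univ C : C ∈ Ue e)
  · intro F hF hFne hsub
    ext C
    constructor
    · intro hC
      by_contra heC
      have hc : ClP.compl C ∈ F := hsub heC
      obtain ⟨z, _, hz1, hz2⟩ := hF.2.1 C hC (ClP.compl C) hc
      obtain ⟨x, hx⟩ := z.2.2.1
      exact hz2 hx (hz1 hx)
    · exact fun h => hsub h

lemma Ue_surj (h2 : ∃ a b : X, a ≠ b) (U : Set (ClP X)) (hU : IsPosetUltrafilter U) :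
    ∃ e : X, Ue e = U := by
  have hne : Nonempty U := hU.1.1.to_subtype
  have hnonempty : (⋂ C : U, (C : ClP X).1).Nonempty := by
    apply IsCompact.nonempty_iInter_of_directed_nonempty_isCompact_isClosed
    · rintro ⟨C, hC⟩ ⟨D, hD⟩
      obtain ⟨z, hz, hz1, hz2⟩ := hU.1.2.1 C hC D hD
      exact ⟨⟨z, hz⟩, hz1, hz2⟩
    · exact fun C => (C : ClP X).2.2.1
    · exact fun C => (C : ClP X).2.1.1.isCompact
    · exact fun C => (C : ClP X).2.1.1
  obtain ⟨e, he⟩ := hnonempty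
  refine ⟨e, hU.2.2 (Ue e) (isFilter_Ue h2 e) (isUltrafilter_Ue h2 e).2.1 ?_⟩
  intro C hC
  exact Set.mem_iInter.1 he ⟨C, hC⟩

end Aux

/-- For a compact Hausdorff totally disconnected space `X` with at least two points, the map
`θ : X → 𝒰(P)`, `e ↦ U_e = {C : e ∈ C}`, is a homeomorphism. -/
theorem stmt9 {X : Type*} [TopologicalSpace X] [CompactSpace X] [T2Space X]
    [TotallyDisconnectedSpace X] (h2 : ∃ a b : X, a ≠ b) :
    ∃ θ : X ≃ₜ UP X, ∀ (e : X) (C : ClP X), C ∈ (θ e).1 ↔ e ∈ C.1 := by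
  have hinj : Function.Injective (fun e : X => (⟨Ue e, isUltrafilter_Ue h2 e⟩ : UP X)) := by
    intro a b hab
    by_contra h
    obtain ⟨C, haC, hbC⟩ := exists_clopen_sep h
    have h1 : Ue a = Ue b := congrArg Subtype.val hab
    have : C ∈ Ue b := h1 ▸ (haC : C ∈ Ue a)
    exact hbC this
  have hsurj : Function.Surjective (fun e : X => (⟨Ue e, isUltrafilter_Ue h2 e⟩ : UP X)) := by
    rintro ⟨U, hU⟩
    obtain ⟨e, he⟩ := Ue_surj h2 U hU
    exact ⟨e, Subtype.ext he⟩
  let E : X ≃ UP X := Equiv.ofBijective _ ⟨hinj, hsurj⟩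
  have hcont : Continuous E := by
    rw [continuous_generateFrom_iff]
    rintro N ⟨C, rfl⟩
    have : (fun e : X => (⟨Ue e, isUltrafilter_Ue h2 e⟩ : UP X)) ⁻¹'
        {U : UP X | C ∈ U.1} = C.1 := rfl
    show IsOpen ((fun e : X => (⟨Ue e, isUltrafilter_Ue h2 e⟩ : UP X)) ⁻¹' _)
    exact C.2.1.2
  have hopen : IsOpenMap E := by
    intro V hV
    rw [isOpen_iff_mem_nhds]
    rintro _ ⟨e, heV, rfl⟩
    obtain ⟨W, hW, heW, hWV⟩ := isTopologicalBasis_isClopen.exists_subset_of_mem_open heV hV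
    by_cases hWu : W = Set.univ
    · have : E '' V = Set.univ := by
        apply Set.eq_univ_of_univ_subset
        have : V = Set.univ := Set.eq_univ_of_univ_subset (hWu ▸ hWV)
        rw [this]
        intro U _
        obtain ⟨x, hx⟩ := hsurj U
        exact ⟨x, trivial, hx⟩
      rw [this]; exact Filter.univ_mem
    · set C : ClP X := ⟨W, hW, ⟨e, heW⟩, hWu⟩
      have hNopen : IsOpen {U : UP X | C ∈ U.1} :=
        TopologicalSpace.GenerateOpen.basic _ ⟨C, rfl⟩
      apply Filter.mem_of_superset (hNopen.mem_nhds (by exact heW))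
      rintro U (hCU : C ∈ U.1)
      obtain ⟨x, rfl⟩ := hsurj U
      exact ⟨x, hWV hCU, rfl⟩
  refine ⟨Equiv.toHomeomorphOfContinuousOpen E hcont hopen, fun e C => Iff.rfl⟩
end

section
/- Any poset automorphism of the poset P of nonempty proper clopen subsets of a compact Hausdorff totally disconnected space X (with at least two points) induces a homeomorphism of X. -/
section Aux

variable {X : Type*} [TopologicalSpace X] [CompactSpace X] [T2Space X]
  [TotallyDisconnectedSpace X]

/-- Complementation in `ClP`. -/
def ClP.cpl (C : ClP X) : ClP X :=
  ⟨C.1ᶜ, C.2.1.compl, Set.nonempty_compl.mpr C.2.2.2, by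
    intro h
    rw [Set.compl_univ_iff] at h
    exact C.2.2.1.ne_empty h⟩

lemma ClP.le_iff {C D : ClP X} : C ≤ D ↔ C.1 ⊆ D.1 := Iff.rfl

lemma ClP.cpl_char (C D : ClP X) :
    D = ClP.cpl C ↔
      ((¬ ∃ E : ClP X, E ≤ C ∧ E ≤ D) ∧ ¬ ∃ E : ClP X, C ≤ E ∧ D ≤ E) := by
  constructor
  · rintro rfl
    constructor
    · rintro ⟨E, h1, h2⟩
      obtain ⟨x, hx⟩ := E.2.2.1
      exact (h2 hx) (h1 hx)
    · rintro ⟨E, h1, h2⟩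
      apply E.2.2.2
      apply Set.eq_univ_of_forall
      intro x
      by_cases hx : x ∈ C.1
      · exact h1 hx
      · exact h2 hx
  · rintro ⟨hl, hu⟩
    have hdisj : C.1 ∩ D.1 = ∅ := by
      by_contra h
      have hne : (C.1 ∩ D.1).Nonempty := Set.nonempty_iff_ne_empty.mpr h
      have hproper : C.1 ∩ D.1 ≠ Set.univ := by
        intro hEq
        apply C.2.2.2
        apply Set.eq_univ_of_forall
        intro z
        have hz : z ∈ C.1 ∩ D.1 := hEq.symm ▸ Set.mem_univ z
        exact hz.1
      exact hl ⟨⟨C.1 ∩ D.1, C.2.1.inter D.2.1, hne, hproper⟩,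
        Set.inter_subset_left, Set.inter_subset_right⟩
    have hcov : C.1 ∪ D.1 = Set.univ := by
      by_contra h
      exact hu ⟨⟨C.1 ∪ D.1, C.2.1.union D.2.1, C.2.2.1.mono Set.subset_union_left, h⟩,
        Set.subset_union_left, Set.subset_union_right⟩
    apply Subtype.ext
    show D.1 = C.1ᶜ
    ext x
    simp only [Set.mem_compl_iff]
    constructor
    · intro hx hxC
      have hmem : x ∈ C.1 ∩ D.1 := ⟨hxC, hx⟩
      simp [hdisj] at hmem
    · intro hx
      rcases Set.eq_univ_iff_forall.mp hcov x with h | h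
      · exact absurd h hx
      · exact h

lemma ClP.map_cpl (ψ : ClP X ≃o ClP X) (C : ClP X) :
    ψ (ClP.cpl C) = ClP.cpl (ψ C) := by
  rw [ClP.cpl_char]
  have base := (ClP.cpl_char C (ClP.cpl C)).mp rfl
  constructor
  · rintro ⟨E, h1, h2⟩
    exact base.1 ⟨ψ.symm E, by
      simpa using ψ.symm.monotone h1, by simpa using ψ.symm.monotone h2⟩
  · rintro ⟨E, h1, h2⟩
    exact base.2 ⟨ψ.symm E, by
      simpa using ψ.symm.monotone h1, by simpa using ψ.symm.monotone h2⟩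

lemma ClP.mem_cpl {C : ClP X} {x : X} : x ∈ (ClP.cpl C).1 ↔ x ∉ C.1 := Iff.rfl

lemma ClP.exists_mem (h2 : ∃ a b : X, a ≠ b) (x : X) : ∃ C : ClP X, x ∈ C.1 := by
  haveI : TotallySeparatedSpace X := loc_compact_t2_tot_disc_iff_tot_sep.mp ‹_›
  obtain ⟨a, b, hab⟩ := h2
  obtain ⟨U, hU, haU, hbU⟩ := exists_isClopen_of_totally_separated hab
  have hUne : U ≠ Set.univ := fun h => hbU (h ▸ Set.mem_univ b)
  set C : ClP X := ⟨U, hU, ⟨a, haU⟩, hUne⟩ with hC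
  by_cases hx : x ∈ U
  · exact ⟨C, hx⟩
  · exact ⟨ClP.cpl C, hx⟩

lemma ClP.key (h2 : ∃ a b : X, a ≠ b) (ψ : ClP X ≃o ClP X) (x : X) :
    ∃! y : X, ∀ C : ClP X, y ∈ (ψ C).1 ↔ x ∈ C.1 := by
  haveI : TotallySeparatedSpace X := loc_compact_t2_tot_disc_iff_tot_sep.mp ‹_›
  haveI : Nonempty {C : ClP X // x ∈ C.1} := by
    obtain ⟨C, hC⟩ := ClP.exists_mem h2 x
    exact ⟨⟨C, hC⟩⟩
  -- existence of a point in the intersection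
  have hne : (⋂ C : {C : ClP X // x ∈ C.1}, (ψ C.1).1).Nonempty := by
    apply IsCompact.nonempty_iInter_of_directed_nonempty_isCompact_isClosed
    · rintro ⟨C, hC⟩ ⟨D, hD⟩
      have hproper : C.1 ∩ D.1 ≠ Set.univ := by
        intro hEq
        apply C.2.2.2
        apply Set.eq_univ_of_forall
        intro z
        have hz : z ∈ C.1 ∩ D.1 := hEq.symm ▸ Set.mem_univ z
        exact hz.1
      refine ⟨⟨⟨C.1 ∩ D.1, C.2.1.inter D.2.1, ⟨x, hC, hD⟩, hproper⟩, ⟨hC, hD⟩⟩, ?_, ?_⟩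
      · exact ψ.monotone (fun z hz => hz.1)
      · exact ψ.monotone (fun z hz => hz.2)
    · exact fun C => (ψ C.1).2.2.1
    · exact fun C => (ψ C.1).2.1.isClosed.isCompact
    · exact fun C => (ψ C.1).2.1.isClosed
  obtain ⟨y, hy⟩ := hne
  have hspec : ∀ C : ClP X, y ∈ (ψ C).1 ↔ x ∈ C.1 := by
    intro C
    constructor
    · intro hyC
      by_contra hx
      have hx' : x ∈ (ClP.cpl C).1 := hx
      have := Set.mem_iInter.mp hy ⟨ClP.cpl C, hx'⟩
      rw [ClP.map_cpl] at this
      exact this hyC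
    · intro hx
      exact Set.mem_iInter.mp hy ⟨C, hx⟩
  refine ⟨y, hspec, ?_⟩
  intro z hz
  by_contra hzy
  obtain ⟨U, hU, hzU, hyU⟩ := exists_isClopen_of_totally_separated hzy
  have hUne : U ≠ Set.univ := fun h => hyU (h ▸ Set.mem_univ y)
  set D : ClP X := ⟨U, hU, ⟨z, hzU⟩, hUne⟩ with hD
  have h1 : z ∈ (ψ (ψ.symm D)).1 ↔ x ∈ (ψ.symm D).1 := hz _
  have h2' : y ∈ (ψ (ψ.symm D)).1 ↔ x ∈ (ψ.symm D).1 := hspec _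
  rw [ψ.apply_symm_apply] at h1 h2'
  exact hyU (h2'.mpr (h1.mp hzU))

noncomputable def ClP.fmap (h2 : ∃ a b : X, a ≠ b) (ψ : ClP X ≃o ClP X) (x : X) : X :=
  (ClP.key h2 ψ x).choose

lemma ClP.fmap_spec (h2 : ∃ a b : X, a ≠ b) (ψ : ClP X ≃o ClP X) (x : X) (C : ClP X) :
    ClP.fmap h2 ψ x ∈ (ψ C).1 ↔ x ∈ C.1 :=
  (ClP.key h2 ψ x).choose_spec.1 C

lemma ClP.fmap_inv (h2 : ∃ a b : X, a ≠ b) (ψ : ClP X ≃o ClP X) (x : X) :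
    ClP.fmap h2 ψ.symm (ClP.fmap h2 ψ x) = x := by
  have hx : ∀ D : ClP X, x ∈ (ψ.symm D).1 ↔ ClP.fmap h2 ψ x ∈ D.1 := by
    intro D
    have := ClP.fmap_spec h2 ψ x (ψ.symm D)
    rw [ψ.apply_symm_apply] at this
    exact this.symm
  exact (ClP.key h2 ψ.symm (ClP.fmap h2 ψ x)).unique
    (fun D => (ClP.fmap_spec h2 ψ.symm (ClP.fmap h2 ψ x) D)) (fun D => hx D)

lemma ClP.fmap_cont (h2 : ∃ a b : X, a ≠ b) (ψ : ClP X ≃o ClP X) :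
    Continuous (ClP.fmap h2 ψ) := by
  rw [continuous_def]
  intro U hU
  rw [isOpen_iff_forall_mem_open]
  intro x hx
  obtain ⟨V, hV, hmem, hsub⟩ := compact_exists_isClopen_in_isOpen hU hx
  by_cases hVuniv : V = Set.univ
  · refine ⟨Set.univ, ?_, isOpen_univ, Set.mem_univ x⟩
    intro z _
    exact hsub (hVuniv ▸ Set.mem_univ (ClP.fmap h2 ψ z))
  · set D : ClP X := ⟨V, hV, ⟨_, hmem⟩, hVuniv⟩ with hD
    refine ⟨(ψ.symm D).1, ?_, (ψ.symm D).2.1.isOpen, ?_⟩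
    · intro z hz
      have := (ClP.fmap_spec h2 ψ z (ψ.symm D)).mpr hz
      rw [ψ.apply_symm_apply] at this
      exact hsub this
    · have := (ClP.fmap_spec h2 ψ x (ψ.symm D))
      rw [ψ.apply_symm_apply] at this
      exact this.mp hmem

end Aux

/-- Any poset automorphism of the poset of nonempty proper clopen subsets of a compact
Hausdorff totally disconnected space `X` with at least two points induces a homeomorphism
of `X`. -/
theorem stmt10 {X : Type*} [TopologicalSpace X] [CompactSpace X] [T2Space X]
    [TotallyDisconnectedSpace X] (h2 : ∃ a b : X, a ≠ b)
    (φ : ClP X ≃o ClP X) :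
    ∃ f : X ≃ₜ X, ∀ (e : X) (C : ClP X), f e ∈ (φ C).1 ↔ e ∈ C.1 := by
  refine ⟨⟨⟨ClP.fmap h2 φ, ClP.fmap h2 φ.symm, fun x => ClP.fmap_inv h2 φ x, fun x => ?_⟩,
    ClP.fmap_cont h2 φ, ClP.fmap_cont h2 φ.symm⟩, fun e C => ClP.fmap_spec h2 φ e C⟩
  have := ClP.fmap_inv h2 φ.symm x
  rwa [OrderIso.symm_symm] at this
end

section
/- Let V = Z^{2g} ⊕ Z^n with the form ω that is the standard symplectic form on Z^{2g} and zero on Z^n, and let γ_1,…,γ_n be the standard basis of the radical Z^n, together with γ_{n+1} := −(γ_1+⋯+γ_n). Suppose x = Σ_{i=1}^n c_i γ_i is in the radical and f is a Z-linear functional on V. If for every pair of indices j ≠ k in {1,…,n+1} there exists f_{jk} ∈ Hom(V,Z) with f_{jk}(γ_j)=1, f_{jk}(γ_k)=−1, f_{jk}(γ_i)=0 otherwise, and |f_{jk}(x)| ≤ 1, then all nonzero coefficients c_i have the same sign and absolute value 1. -/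
/-- `V = ℤ^{2g} ⊕ ℤ^n`, written as `(ℤ^g × ℤ^g) × ℤ^n`. -/
abbrev VV (g n : ℕ) : Type := (Fin g → ℤ) × (Fin g → ℤ) × (Fin n → ℤ)

/-- The form which is the standard symplectic form on `ℤ^{2g}` and zero on `ℤ^n`. -/
def omegaGN (g n : ℕ) (v w : VV g n) : ℤ :=
  ∑ i : Fin g, (v.1 i * w.2.1 i - v.2.1 i * w.1 i)

/-- In `V = ℤ^{2g} ⊕ ℤ^n`, let `γ_1,…,γ_n` be the standard basis of the radical `ℤ^n` and
`γ_{n+1} = -(γ_1 + ⋯ + γ_n)`. Suppose `x = Σ c_i γ_i` is in the radical and for every pair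
`j ≠ k` there is a linear functional `f` with `f(γ_j) = 1`, `f(γ_k) = -1`, vanishing on the
other `γ_i`, and `|f(x)| ≤ 1`. Then all nonzero coefficients `c_i` have the same sign and
absolute value `1`. -/
theorem stmt14 (g n : ℕ) (γ : Fin (n + 1) → VV g n)
    (hγ : ∀ i : Fin n, γ i.castSucc = (0, 0, Pi.single i 1))
    (hlast : γ (Fin.last n) = - ∑ i : Fin n, γ i.castSucc)
    (c : Fin n → ℤ) (x : VV g n)
    (hx : x = ∑ i : Fin n, c i • γ i.castSucc)
    (hrad : ∀ w : VV g n, omegaGN g n x w = 0)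
    (hf : ∀ j k : Fin (n + 1), j ≠ k →
      ∃ f : VV g n →ₗ[ℤ] ℤ, f (γ j) = 1 ∧ f (γ k) = -1 ∧
        (∀ i, i ≠ j → i ≠ k → f (γ i) = 0) ∧ |f x| ≤ 1) :
    (∀ i, c i = 0 ∨ c i = 1) ∨ (∀ i, c i = 0 ∨ c i = -1) := by

  have hfx : ∀ (f : VV g n →ₗ[ℤ] ℤ), f x = ∑ i : Fin n, c i * f (γ i.castSucc) := by
    intro f
    rw [hx, map_sum]
    simp only [map_smul, smul_eq_mul]
  have habs : ∀ i : Fin n, |c i| ≤ 1 := by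
    intro i
    obtain ⟨f, h1, h2, h3, h4⟩ := hf i.castSucc (Fin.last n) (Fin.castSucc_lt_last i).ne
    have hfxi : f x = c i := by
      rw [hfx, Finset.sum_eq_single i]
      · rw [h1]; ring
      · intro b _ hb
        rw [h3 b.castSucc (by simpa [Fin.castSucc_inj] using hb)
          (Fin.castSucc_lt_last b).ne, mul_zero]
      · simp
    rwa [hfxi] at h4
  have hdiff : ∀ i j : Fin n, i ≠ j → |c i - c j| ≤ 1 := by
    intro i j hij
    obtain ⟨f, h1, h2, h3, h4⟩ := hf i.castSucc j.castSucc
      (fun h => hij (Fin.castSucc_inj.mp h))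
    have hfxi : f x = c i - c j := by
      rw [hfx]
      rw [Finset.sum_eq_add_of_mem i j (Finset.mem_univ i) (Finset.mem_univ j) hij
        (fun b _ hb => by
          rw [h3 b.castSucc (by simpa [Fin.castSucc_inj] using hb.1)
            (by simpa [Fin.castSucc_inj] using hb.2), mul_zero])]
      rw [h1, h2]; ring
    rwa [hfxi] at h4
  by_cases h : ∃ k, c k = -1
  · right
    intro i
    obtain ⟨k, hk⟩ := h
    rcases eq_or_ne i k with rfl | hik
    · right; exact hk
    · have h1 := hdiff i k hik
      have h2 := habs i
      rw [hk, abs_le] at h1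
      rw [abs_le] at h2
      omega
  · left
    intro i
    have h2 := habs i
    rw [abs_le] at h2
    push_neg at h
    have := h i
    omega
end
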